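/- arXiv:1711.03724 — 2 statements merged into one kernel-verified Lean document; each statement's English description precedes it below -/
import Mathlib

section
/- Let m ≥ 4 and suppose the constant sequence (1, 1, …, 1) ∈ ℂ^m is a quiddity cycle. Then there exists a triangulation T of the convex m-gon such that for every diagonal (i,j) ∈ T the frieze entry of (i,j), namely the (1,1)-entry of η(1)^{j−i−1}, is non-zero. -/
/-- The matrix `η(c) = !![c, -1; 1, 0]` over `ℂ`. -/
def eta (c : ℂ) : Matrix (Fin 2) (Fin 2) ℂ := !![c, -1; 1, 0]

/-- A diagonal of the convex `m`-gon with vertices `1, …, m`. -/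
def IsDiagonal (m : ℕ) (p : ℕ × ℕ) : Prop :=
  1 ≤ p.1 ∧ p.1 < p.2 ∧ p.2 ≤ m ∧ 2 ≤ p.2 - p.1 ∧ p ≠ (1, m)

/-- Two diagonals cross. -/
def Cross (p q : ℕ × ℕ) : Prop :=
  (p.1 < q.1 ∧ q.1 < p.2 ∧ p.2 < q.2) ∨ (q.1 < p.1 ∧ p.1 < q.2 ∧ q.2 < p.2)

/-- A triangulation of the convex `m`-gon: a set of `m − 3` pairwise non-crossing
diagonals. -/
def IsTriangulation (m : ℕ) (T : Finset (ℕ × ℕ)) : Prop :=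
  T.card = m - 3 ∧ (∀ p ∈ T, IsDiagonal m p) ∧
    ∀ p ∈ T, ∀ q ∈ T, p ≠ q → ¬ Cross p q

/-!
Since `η(1)³ = -1`, the entries of `η(1)ⁿ` depend only on `n mod 3` up to sign: the
`(1,1)`-entry vanishes exactly when `n ≡ 2 (mod 3)`, and `η(1)ᵐ = -1` forces `3 ∣ m`. The
frieze entry of a diagonal `(i, j)` is therefore non-zero exactly when `3 ∤ j - i`, and for
`m = 3k` the triangulation with diagonals `(1, 3t)`, `(1, 3t + 2)` and `(3t, 3t + 2)`,
`1 ≤ t < k`, has this property.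
-/

open Finset

lemma eta_one_pow_three : eta 1 ^ 3 = -1 := by
  ext i j
  fin_cases i <;> fin_cases j <;> simp [eta, pow_succ]

lemma eta_one_pow_apply (n : ℕ) (i j : Fin 2) :
    (eta 1 ^ n) i j = (-1) ^ (n / 3) * (eta 1 ^ (n % 3)) i j := by
  conv_lhs => rw [← Nat.div_add_mod n 3, pow_add, pow_mul, eta_one_pow_three,
    ← neg_one_smul ℂ (1 : Matrix (Fin 2) (Fin 2) ℂ), smul_pow, one_pow, smul_mul_assoc, one_mul]
  rfl

lemma eta_one_pow_apply_zero_zero_ne_zero {n : ℕ} (hn : ¬ 3 ∣ n + 1) :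
    (eta 1 ^ n) 0 0 ≠ 0 := by
  rw [eta_one_pow_apply]
  refine mul_ne_zero (pow_ne_zero _ (neg_ne_zero.2 one_ne_zero)) ?_
  have : n % 3 = 0 ∨ n % 3 = 1 := by omega
  rcases this with h | h <;> simp [h, eta]

lemma three_dvd_of_eta_one_pow_eq_neg_one {m : ℕ} (hm : eta 1 ^ m = -1) : 3 ∣ m := by
  have h10 : (-1 : ℂ) ^ (m / 3) * (eta 1 ^ (m % 3)) 1 0 = 0 := by
    rw [← eta_one_pow_apply, hm]; simp
  have hr : (eta 1 ^ (m % 3)) 1 0 = 0 :=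
    (mul_eq_zero.1 h10).resolve_left (pow_ne_zero _ (neg_ne_zero.2 one_ne_zero))
  have : m % 3 = 0 ∨ m % 3 = 1 ∨ m % 3 = 2 := by omega
  rcases this with h | h | h
  · exact Nat.dvd_of_mod_eq_zero h
  all_goals simp [h, eta, pow_succ] at hr

def fanTriangulation (k : ℕ) : Finset (ℕ × ℕ) :=
  (range (k - 1)).image (fun s => (1, 3 * s + 3)) ∪
    (range (k - 1)).image (fun s => (1, 3 * s + 5)) ∪
    (range (k - 1)).image (fun s => (3 * s + 3, 3 * s + 5))

lemma mem_fanTriangulation {k : ℕ} {p : ℕ × ℕ} :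
    p ∈ fanTriangulation k ↔ ∃ s < k - 1,
      p = (1, 3 * s + 3) ∨ p = (1, 3 * s + 5) ∨ p = (3 * s + 3, 3 * s + 5) := by
  simp only [fanTriangulation, mem_union, mem_image, mem_range]
  constructor
  · rintro ((⟨s, hs, rfl⟩ | ⟨s, hs, rfl⟩) | ⟨s, hs, rfl⟩) <;> exact ⟨s, hs, by simp⟩
  · rintro ⟨s, hs, rfl | rfl | rfl⟩
    exacts [Or.inl (Or.inl ⟨s, hs, rfl⟩), Or.inl (Or.inr ⟨s, hs, rfl⟩), Or.inr ⟨s, hs, rfl⟩]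

lemma card_fanTriangulation (k : ℕ) : (fanTriangulation k).card = 3 * k - 3 := by
  have inj : ∀ f : ℕ → ℕ × ℕ, f.Injective → ((range (k - 1)).image f).card = k - 1 :=
    fun f hf => by rw [card_image_of_injective _ hf, card_range]
  have disj₁ : Disjoint ((range (k - 1)).image (fun s => (1, 3 * s + 3)))
      ((range (k - 1)).image (fun s => (1, 3 * s + 5))) := by
    simp only [disjoint_left, mem_image]
    rintro _ ⟨s, -, rfl⟩ ⟨t, -, h⟩
    simp only [Prod.mk.injEq] at h; omega
  have disj₂ : Disjoint ((range (k - 1)).image (fun s => (1, 3 * s + 3)) ∪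
      (range (k - 1)).image (fun s => (1, 3 * s + 5)))
      ((range (k - 1)).image (fun s => (3 * s + 3, 3 * s + 5))) := by
    simp only [disjoint_left, mem_union, mem_image]
    rintro _ (⟨s, -, rfl⟩ | ⟨s, -, rfl⟩) ⟨t, -, h⟩ <;> simp only [Prod.mk.injEq] at h <;> omega
  rw [fanTriangulation, card_union_of_disjoint disj₂, card_union_of_disjoint disj₁,
    inj _ fun s t h => by simp only [Prod.mk.injEq] at h; omega,
    inj _ fun s t h => by simp only [Prod.mk.injEq] at h; omega,
    inj _ fun s t h => by simp only [Prod.mk.injEq] at h; omega]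
  omega

lemma isTriangulation_fanTriangulation (k : ℕ) :
    IsTriangulation (3 * k) (fanTriangulation k) := by
  refine ⟨card_fanTriangulation k, fun p hp => ?_, fun p hp q hq _ => ?_⟩
  · obtain ⟨s, hs, rfl | rfl | rfl⟩ := mem_fanTriangulation.1 hp <;>
      exact ⟨by omega, by omega, by omega, by omega, by simp only [ne_eq, Prod.mk.injEq]; omega⟩
  · obtain ⟨s, hs, rfl | rfl | rfl⟩ := mem_fanTriangulation.1 hp <;>
      obtain ⟨t, ht, rfl | rfl | rfl⟩ := mem_fanTriangulation.1 hq <;>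
      simp only [Cross] <;> omega

lemma not_three_dvd_of_mem_fanTriangulation {k : ℕ} {p : ℕ × ℕ}
    (hp : p ∈ fanTriangulation k) : ¬ 3 ∣ p.2 - p.1 := by
  obtain ⟨s, -, rfl | rfl | rfl⟩ := mem_fanTriangulation.1 hp <;> omega

theorem stmt15_general (m : ℕ)
    (hq : ((List.range m).map (fun _ => eta 1)).prod = -1) :
    ∃ T : Finset (ℕ × ℕ), IsTriangulation m T ∧
      ∀ p ∈ T, (eta 1 ^ (p.2 - p.1 - 1)) 0 0 ≠ 0 := by
  have hpow : eta 1 ^ m = -1 := by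
    rwa [List.map_const', List.length_range, List.prod_replicate] at hq
  obtain ⟨k, rfl⟩ := three_dvd_of_eta_one_pow_eq_neg_one hpow
  refine ⟨fanTriangulation k, isTriangulation_fanTriangulation k, fun p hp => ?_⟩
  have hlen := ((isTriangulation_fanTriangulation k).2.1 p hp).2.2.2.1
  have hndvd := not_three_dvd_of_mem_fanTriangulation hp
  exact eta_one_pow_apply_zero_zero_ne_zero (by omega)

/-- If the constant sequence `(1, …, 1)` of length `m ≥ 4` is a quiddity cycle, then there
is a triangulation of the `m`-gon all of whose diagonals `(i, j)` have non-zero frieze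
entry, the `(1,1)`-entry of `η(1)^(j−i−1)`. -/
theorem stmt15 (m : ℕ) (hm : 4 ≤ m)
    (hq : ((List.range m).map (fun _ => eta 1)).prod = -1) :
    ∃ T : Finset (ℕ × ℕ), IsTriangulation m T ∧
      ∀ p ∈ T, (eta 1 ^ (p.2 - p.1 - 1)) 0 0 ≠ 0 :=
  stmt15_general m hq
end

section
/- Let m ≥ 4 and let (c₁,…,c_m) ∈ ℂ^m be a quiddity cycle with at least one non-zero entry. Then there exists a triangulation T of the convex m-gon such that for every diagonal (i,j) ∈ T the frieze entry of (i,j), i.e. the (1,1)-entry of η(c_i)·η(c_{i+1})⋯η(c_{j−2}), is non-zero. -/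
/-!
Induct on `m`, for every sequence whose monodromy `η(c₁)⋯η(c_m)` is a scalar `ε`
(necessarily `±1`).

If no `c_k` vanishes, take the fan at vertex `1` and replace each diagonal `(1, j)` with vanishing
entry by the ear `(j - 1, j + 1)`, whose entry is `c_{j-1}`. The entries of `(1, j)` and
`(1, j + 1)` form the first row of a matrix of determinant `1`, so they never both vanish and
the ears do not cross.

Otherwise rotate the cycle so that `c₁ ≠ 0 = c₂`; rotations transport good triangulations thanks
to the glide symmetry `F(i, j) = -ε F(j, i + m)` of frieze entries. Since
`η(a) η(0) η(b) = -η(a + b)`, the contracted sequence `(c₁ + c₃, c₄, …, c_m)` has monodromy `-ε`,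
and a good triangulation of the `(m - 2)`-gon for it lifts to the `m`-gon by adding the diagonals
`(1, 3)` and `(1, 4)`, whose entries are `c₁` and `-1`. The rotation can be chosen so that the
contracted sequence is not identically zero.
-/

def etaProd (c : ℕ → ℂ) (i n : ℕ) : Matrix (Fin 2) (Fin 2) ℂ :=
  ((List.range n).map fun k => eta (c (i + k))).prod

def friezeEntry (c : ℕ → ℂ) (i j : ℕ) : ℂ := etaProd c i (j - i - 1) 0 0

section etaProd

variable (c : ℕ → ℂ)

@[simp] lemma etaProd_zero (i : ℕ) : etaProd c i 0 = 1 := rfl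

lemma etaProd_succ (i n : ℕ) : etaProd c i (n + 1) = etaProd c i n * eta (c (i + n)) := by
  simp [etaProd, List.range_succ]

lemma etaProd_add (i a b : ℕ) : etaProd c i (a + b) = etaProd c i a * etaProd c (i + a) b := by
  simp [etaProd, List.range_add, Function.comp_def, add_assoc]

@[simp] lemma etaProd_one (i : ℕ) : etaProd c i 1 = eta (c i) := by
  simp [etaProd]

lemma etaProd_succ' (i n : ℕ) : etaProd c i (n + 1) = eta (c i) * etaProd c (i + 1) n := by
  rw [add_comm n, etaProd_add, etaProd_one]

lemma etaProd_shift (s i n : ℕ) : etaProd (fun k => c (k + s)) i n = etaProd c (i + s) n := by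
  simp only [etaProd, add_right_comm]

variable {c} in
lemma etaProd_congr {d : ℕ → ℂ} {i j n : ℕ} (h : ∀ k < n, c (i + k) = d (j + k)) :
    etaProd c i n = etaProd d j n := by
  unfold etaProd
  congr 1
  exact List.map_congr_left fun k hk => by rw [h k (List.mem_range.mp hk)]

lemma det_eta (x : ℂ) : (eta x).det = 1 := by simp [eta, Matrix.det_fin_two_of]

lemma det_etaProd (i n : ℕ) : (etaProd c i n).det = 1 := by
  induction n with
  | zero => simp
  | succ n ih => rw [etaProd_succ, Matrix.det_mul, ih, det_eta, one_mul]

lemma etaProd_succ_apply_zero_one (i n : ℕ) : etaProd c i (n + 1) 0 1 = -etaProd c i n 0 0 := by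
  simp [etaProd_succ, eta, Matrix.mul_apply, Fin.sum_univ_two]

end etaProd

lemma friezeEntry_add_one (c : ℕ → ℂ) (i n : ℕ) :
    friezeEntry c i (i + n + 1) = etaProd c i n 0 0 := by
  simp only [friezeEntry, show i + n + 1 - i - 1 = n by omega]

lemma friezeEntry_ear (c : ℕ → ℂ) (i : ℕ) : friezeEntry c i (i + 2) = c i := by
  simp [friezeEntry, eta]

lemma not_friezeEntry_eq_zero_and (c : ℕ → ℂ) {i j : ℕ} (hij : i < j) :
    ¬(friezeEntry c i j = 0 ∧ friezeEntry c i (j + 1) = 0) := by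
  rintro ⟨hj, hj1⟩
  obtain ⟨n, rfl⟩ : ∃ n, j = i + n + 1 := ⟨j - i - 1, by omega⟩
  rw [friezeEntry_add_one] at hj
  rw [show i + n + 1 + 1 = i + (n + 1) + 1 by ring, friezeEntry_add_one] at hj1
  have := det_etaProd c i (n + 1)
  rw [Matrix.det_fin_two, hj1, etaProd_succ_apply_zero_one, hj] at this
  simp at this

lemma apply_zero_zero_eq_of_mul_eta_mul_eta_eq_smul {A B : Matrix (Fin 2) (Fin 2) ℂ}
    {x y ε : ℂ} (hB : B.det = 1) (h : A * eta x * B * eta y = ε • 1) : A 0 0 = -ε * B 0 0 := by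
  set M := eta x * B * eta y
  have hM : M.det = 1 := by simp [M, Matrix.det_mul, det_eta, hB]
  have hA : A = ε • M.adjugate := by
    calc A = A * (M * M.adjugate) := by rw [Matrix.mul_adjugate, hM, one_smul, Matrix.mul_one]
      _ = ε • M.adjugate := by
        rw [← Matrix.mul_assoc, show A * M = ε • 1 by simpa [M, Matrix.mul_assoc] using h,
          Matrix.smul_mul, Matrix.one_mul]
  rw [hA, Matrix.adjugate_fin_two]
  simp [M, eta, Matrix.mul_apply, Fin.sum_univ_two, Matrix.vecMul, dotProduct]

lemma friezeEntry_eq_neg_mul {c : ℕ → ℂ} {i j m : ℕ} {ε : ℂ} (h : etaProd c i m = ε • 1)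
    (hij : i < j) (hjm : j < i + m) :
    friezeEntry c i j = -ε * friezeEntry c j (i + m) := by
  obtain ⟨a, rfl⟩ : ∃ a, j = i + a + 1 := ⟨j - i - 1, by omega⟩
  obtain ⟨b, rfl⟩ : ∃ b, m = a + 1 + b + 1 := ⟨m - a - 2, by omega⟩
  rw [etaProd_succ, etaProd_add, etaProd_succ] at h
  rw [show i + (a + 1 + b + 1) = i + a + 1 + b + 1 by ring, friezeEntry_add_one,
    friezeEntry_add_one]
  refine apply_zero_zero_eq_of_mul_eta_mul_eta_eq_smul (x := c (i + a))
    (y := c (i + (a + 1 + b))) (det_etaProd c _ _) ?_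
  simpa only [add_assoc] using h

lemma ne_zero_of_etaProd_eq_smul {c : ℕ → ℂ} {i n : ℕ} {ε : ℂ} (h : etaProd c i n = ε • 1) :
    ε ≠ 0 := by
  rintro rfl
  simpa [det_etaProd] using congrArg Matrix.det h

lemma etaProd_succ_eq_smul {c : ℕ → ℂ} {i m : ℕ} {ε : ℂ} (h : etaProd c i m = ε • 1)
    (hc : c (i + m) = c i) : etaProd c (i + 1) m = ε • 1 := by
  have hunit : IsUnit (eta (c i)) := (Matrix.isUnit_iff_isUnit_det _).mpr (by simp [det_eta])
  refine hunit.mul_left_cancel ?_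
  rw [← etaProd_succ', etaProd_succ, h, hc, Matrix.smul_mul, Matrix.mul_smul, Matrix.one_mul,
    Matrix.mul_one]

lemma etaProd_add_eq_smul_of_periodic {c : ℕ → ℂ} {m : ℕ} {ε : ℂ}
    (hc : Function.Periodic c m) (h : etaProd c 1 m = ε • 1) (s : ℕ) :
    etaProd c (1 + s) m = ε • 1 := by
  induction s with
  | zero => exact h
  | succ s ih => exact etaProd_succ_eq_smul ih (hc _)

lemma isDiagonal_iff {m a b : ℕ} :
    IsDiagonal m (a, b) ↔ 1 ≤ a ∧ a + 2 ≤ b ∧ b ≤ m ∧ (a = 1 → b < m) := by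
  simp only [IsDiagonal, ne_eq, Prod.mk.injEq]
  omega

def HasNonvanishingTriangulation (m : ℕ) (c : ℕ → ℂ) : Prop :=
  ∃ T : Finset (ℕ × ℕ), IsTriangulation m T ∧ ∀ p ∈ T, friezeEntry c p.1 p.2 ≠ 0

lemma hasNonvanishingTriangulation_of_le_three {m : ℕ} (hm : m ≤ 3) (c : ℕ → ℂ) :
    HasNonvanishingTriangulation m c :=
  ⟨∅, ⟨by simp; omega, by simp, by simp⟩, by simp⟩

lemma HasNonvanishingTriangulation.congr {m : ℕ} {c d : ℕ → ℂ}
    (h : HasNonvanishingTriangulation m c) (hcd : ∀ k, 1 ≤ k → k ≤ m → c k = d k) :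
    HasNonvanishingTriangulation m d := by
  obtain ⟨T, hT, hne⟩ := h
  refine ⟨T, hT, fun ⟨a, b⟩ hp => ?_⟩
  have hab := isDiagonal_iff.mp (hT.2.1 _ hp)
  have hprod : etaProd d a (b - a - 1) = etaProd c a (b - a - 1) :=
    etaProd_congr fun k hk => (hcd (a + k) (by omega) (by omega)).symm
  simpa only [friezeEntry, hprod] using hne _ hp

open Classical in
noncomputable def fanDiagonal (c : ℕ → ℂ) (j : ℕ) : ℕ × ℕ :=
  if friezeEntry c 1 j = 0 then (j - 1, j + 1) else (1, j)

lemma hasNonvanishingTriangulation_fan {m : ℕ} {c : ℕ → ℂ}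
    (h : ∀ j, 3 ≤ j → j + 1 ≤ m → friezeEntry c 1 j = 0 → c (j - 1) ≠ 0) :
    HasNonvanishingTriangulation m c := by
  classical
  have hnot_both (j : ℕ) (hj : 3 ≤ j) := not_friezeEntry_eq_zero_and c (show 1 < j by omega)
  refine ⟨(Finset.Icc 3 (m - 1)).image (fanDiagonal c), ⟨?_, ?_, ?_⟩, ?_⟩
  · rw [Finset.card_image_of_injOn, Nat.card_Icc]
    · omega
    intro j hj j' hj' hjj'
    simp only [Finset.coe_Icc, Set.mem_Icc, fanDiagonal] at hj hj' hjj'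
    split_ifs at hjj' <;> simp only [Prod.mk.injEq] at hjj' <;> omega
  · simp only [Finset.mem_image, Finset.mem_Icc, forall_exists_index, and_imp]
    rintro _ j hj3 hjm rfl
    unfold fanDiagonal
    split_ifs <;> rw [isDiagonal_iff] <;> omega
  · simp only [Finset.mem_image, Finset.mem_Icc]
    rintro _ ⟨j, hj, rfl⟩ _ ⟨j', hj', rfl⟩ hne hcross
    unfold fanDiagonal Cross at *
    split_ifs at hne hcross with h₁ h₂ h₂ <;> simp only [ne_eq, Prod.mk.injEq] at hne hcross
    · rcases (show j' = j + 1 ∨ j = j' + 1 by omega) with rfl | rfl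
      exacts [hnot_both j hj.1 ⟨h₁, h₂⟩, hnot_both j' hj'.1 ⟨h₂, h₁⟩]
    · exact h₂ (show j = j' by omega ▸ h₁)
    · exact h₁ (show j' = j by omega ▸ h₂)
    · omega
  · simp only [Finset.mem_image, Finset.mem_Icc]
    rintro _ ⟨j, hj, rfl⟩
    unfold fanDiagonal
    split_ifs with hj0
    · rw [show j + 1 = j - 1 + 2 by omega, friezeEntry_ear]
      exact h j hj.1 (by omega) hj0
    · exact hj0

lemma friezeEntry_shift (c : ℕ → ℂ) (s i j : ℕ) :
    friezeEntry (fun k => c (k + s)) i j = friezeEntry c (i + s) (j + s) := by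
  simp only [friezeEntry, etaProd_shift, Nat.add_sub_add_right]

def rotateDiagonal (m : ℕ) (p : ℕ × ℕ) : ℕ × ℕ :=
  if p.2 < m then (p.1 + 1, p.2 + 1) else (1, p.1 + 1)

lemma IsTriangulation.image_rotateDiagonal {m : ℕ} {T : Finset (ℕ × ℕ)}
    (hT : IsTriangulation m T) : IsTriangulation m (T.image (rotateDiagonal m)) := by
  obtain ⟨hcard, hdiag, hcross⟩ := hT
  refine ⟨?_, ?_, ?_⟩
  · rw [Finset.card_image_of_injOn, hcard]
    rintro ⟨a, b⟩ hp ⟨a', b'⟩ hq hpq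
    have := isDiagonal_iff.mp (hdiag _ hp)
    have := isDiagonal_iff.mp (hdiag _ hq)
    simp only [rotateDiagonal] at hpq
    split_ifs at hpq <;> simp only [Prod.mk.injEq] at hpq ⊢ <;> omega
  · simp only [Finset.mem_image, forall_exists_index, and_imp]
    rintro _ ⟨a, b⟩ hp rfl
    have := isDiagonal_iff.mp (hdiag _ hp)
    unfold rotateDiagonal
    split_ifs <;> rw [isDiagonal_iff] <;> omega
  · simp only [Finset.mem_image]
    rintro _ ⟨⟨a, b⟩, hp, rfl⟩ _ ⟨⟨a', b'⟩, hq, rfl⟩ hne hpq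
    have := isDiagonal_iff.mp (hdiag _ hp)
    have := isDiagonal_iff.mp (hdiag _ hq)
    refine hcross _ hp _ hq (fun h => hne (h ▸ rfl)) ?_
    unfold rotateDiagonal Cross at *
    split_ifs at hpq <;> simp only at hpq ⊢ <;> omega

lemma HasNonvanishingTriangulation.of_shift_one {m : ℕ} {c : ℕ → ℂ} {ε : ℂ}
    (hc : etaProd c 1 m = ε • 1) (h : HasNonvanishingTriangulation m fun k => c (k + 1)) :
    HasNonvanishingTriangulation m c := by
  obtain ⟨T, hT, hne⟩ := h
  refine ⟨_, hT.image_rotateDiagonal, ?_⟩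
  simp only [Finset.mem_image]
  rintro _ ⟨⟨a, b⟩, hp, rfl⟩
  have hab := isDiagonal_iff.mp (hT.2.1 _ hp)
  have hfr := hne _ hp
  simp only [friezeEntry_shift] at hfr
  unfold rotateDiagonal
  split_ifs with hb
  · exact hfr
  · rw [friezeEntry_eq_neg_mul hc (by omega) (by omega), add_comm 1 m, ← show b = m by omega]
    exact mul_ne_zero (neg_ne_zero.mpr (ne_zero_of_etaProd_eq_smul hc)) hfr

lemma HasNonvanishingTriangulation.of_shift {m : ℕ} {c : ℕ → ℂ} {ε : ℂ}
    (hc : Function.Periodic c m) (h1 : etaProd c 1 m = ε • 1) (s : ℕ)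
    (h : HasNonvanishingTriangulation m fun k => c (k + s)) :
    HasNonvanishingTriangulation m c := by
  induction s with
  | zero => exact h
  | succ s ih =>
    refine ih (HasNonvanishingTriangulation.of_shift_one (ε := ε) ?_ ?_)
    · rw [etaProd_shift, etaProd_add_eq_smul_of_periodic hc h1]
    · simpa only [add_right_comm _ 1 s, add_assoc] using h

def contract (c : ℕ → ℂ) (k : ℕ) : ℂ := if k = 1 then c 1 + c 3 else c (k + 2)

lemma eta_mul_eta_zero_mul_eta (a b : ℂ) : eta a * eta 0 * eta b = -eta (a + b) := by
  ext i j
  fin_cases i <;> fin_cases j <;> simp [eta, Matrix.mul_apply, Fin.sum_univ_two]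

section contract

variable {c : ℕ → ℂ} (h2 : c 2 = 0)
include h2

lemma etaProd_contract (n : ℕ) : etaProd (contract c) 1 (n + 1) = -etaProd c 1 (n + 3) := by
  have hhead : etaProd c 1 3 = -eta (contract c 1) := by
    simp [show 3 = 0 + 1 + 1 + 1 from rfl, etaProd_succ, h2, eta_mul_eta_zero_mul_eta,
      contract]
  have htail : etaProd (contract c) 2 n = etaProd c 4 n :=
    etaProd_congr fun k _ => by simp [contract, show 2 + k ≠ 1 by omega, add_right_comm 2 k 2]
  rw [etaProd_succ', add_comm n, etaProd_add, hhead, htail, Matrix.neg_mul, neg_neg]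

lemma friezeEntry_contract_one {b : ℕ} (hb : 3 ≤ b) :
    friezeEntry (contract c) 1 b = -friezeEntry c 1 (b + 2) := by
  simp only [friezeEntry, show b - 1 - 1 = b - 3 + 1 by omega,
    show b + 2 - 1 - 1 = b - 3 + 3 by omega, etaProd_contract h2, Matrix.neg_apply]

lemma etaProd_contract_eq_smul {m : ℕ} {ε : ℂ} (hm : 1 ≤ m)
    (h : etaProd c 1 (m + 2) = ε • 1) : etaProd (contract c) 1 m = (-ε) • 1 := by
  obtain ⟨n, rfl⟩ : ∃ n, m = n + 1 := ⟨m - 1, by omega⟩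
  rw [etaProd_contract h2, h, neg_smul]

end contract

lemma friezeEntry_contract (c : ℕ → ℂ) {a : ℕ} (b : ℕ) (ha : 2 ≤ a) :
    friezeEntry (contract c) a b = friezeEntry c (a + 2) (b + 2) := by
  simp only [friezeEntry, Nat.add_sub_add_right]
  rw [etaProd_congr (d := c) (j := a + 2) fun k _ => by
    simp [contract, show a + k ≠ 1 by omega, add_right_comm a k 2]]

def liftVertex (v : ℕ) : ℕ := if v = 1 then 1 else v + 2

lemma liftVertex_injective : Function.Injective liftVertex := by
  intro v w h
  simp only [liftVertex] at h
  split_ifs at h <;> omega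

def liftTriangulation (T : Finset (ℕ × ℕ)) : Finset (ℕ × ℕ) :=
  insert (1, 3) (insert (1, 4) (T.image (Prod.map liftVertex liftVertex)))

lemma IsTriangulation.lift {m : ℕ} {T : Finset (ℕ × ℕ)} (hm : 3 ≤ m)
    (hT : IsTriangulation m T) : IsTriangulation (m + 2) (liftTriangulation T) := by
  obtain ⟨hcard, hdiag, hcross⟩ := hT
  have himage : ∀ p ∈ T.image (Prod.map liftVertex liftVertex),
      IsDiagonal (m + 2) p ∧ (p.1 = 1 ∨ 4 ≤ p.1) ∧ 5 ≤ p.2 := by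
    simp only [Finset.mem_image]
    rintro _ ⟨⟨a, b⟩, hp, rfl⟩
    have := isDiagonal_iff.mp (hdiag _ hp)
    simp only [Prod.map, liftVertex, isDiagonal_iff]
    split_ifs <;> omega
  refine ⟨?_, ?_, ?_⟩
  · rw [liftTriangulation, Finset.card_insert_of_notMem, Finset.card_insert_of_notMem,
      Finset.card_image_of_injective _ (liftVertex_injective.prodMap liftVertex_injective), hcard]
    · omega
    · intro h; have := himage _ h; omega
    · simp only [Finset.mem_insert, Prod.mk.injEq]
      rintro (h | h)
      · omega
      · have := himage _ h; omega
  · simp only [liftTriangulation, Finset.mem_insert]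
    rintro p (rfl | rfl | hp)
    · rw [isDiagonal_iff]; omega
    · rw [isDiagonal_iff]; omega
    · exact (himage p hp).1
  · simp only [liftTriangulation, Finset.mem_insert]
    rintro p hp q hq hne hpq
    rcases hp with rfl | rfl | hp <;> rcases hq with rfl | rfl | hq <;>
      norm_num [Cross] at hpq
    · have := himage q hq; omega
    · have := himage q hq; omega
    · have := himage p hp; omega
    · have := himage p hp; omega
    simp only [Finset.mem_image] at hp hq
    obtain ⟨⟨a, b⟩, hp, rfl⟩ := hp
    obtain ⟨⟨a', b'⟩, hq, rfl⟩ := hq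
    refine hcross _ hp _ hq (fun h => hne (h ▸ rfl)) ?_
    have := isDiagonal_iff.mp (hdiag _ hp)
    have := isDiagonal_iff.mp (hdiag _ hq)
    unfold Cross liftVertex at *
    simp only [Prod.map] at hpq ⊢
    split_ifs at hpq <;> omega

lemma HasNonvanishingTriangulation.of_contract {m : ℕ} {c : ℕ → ℂ} (hm : 3 ≤ m)
    (h1 : c 1 ≠ 0) (h2 : c 2 = 0) (h : HasNonvanishingTriangulation m (contract c)) :
    HasNonvanishingTriangulation (m + 2) c := by
  obtain ⟨T, hT, hne⟩ := h
  refine ⟨liftTriangulation T, hT.lift hm, ?_⟩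
  simp only [liftTriangulation, Finset.mem_insert, Finset.mem_image]
  rintro _ (rfl | rfl | ⟨⟨a, b⟩, hp, rfl⟩)
  · simpa [friezeEntry_ear] using h1
  · simp [friezeEntry, show 4 - 1 - 1 = 0 + 1 + 1 from rfl, etaProd_succ, eta, h2]
  · have := isDiagonal_iff.mp (hT.2.1 _ hp)
    have hfr := hne _ hp
    dsimp only at hfr
    simp only [Prod.map, liftVertex, if_neg (show b ≠ 1 by omega)]
    split_ifs with ha
    · rw [ha, friezeEntry_contract_one h2 (by omega)] at hfr
      exact neg_ne_zero.mp hfr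
    · rwa [friezeEntry_contract c b (by omega)] at hfr

-- `k + m - 1` rather than `k - 1`, so that the index `0` is read as `m`.
def periodize (m : ℕ) (c : ℕ → ℂ) (k : ℕ) : ℂ := c ((k + m - 1) % m + 1)

lemma periodic_periodize (m : ℕ) (c : ℕ → ℂ) : Function.Periodic (periodize m c) m := by
  intro k
  rw [periodize, periodize, show k + m + m - 1 = k + m - 1 + m by omega, Nat.add_mod_right]

lemma periodize_apply {m k : ℕ} (c : ℕ → ℂ) (hk : 1 ≤ k) (hkm : k ≤ m) :
    periodize m c k = c k := by
  rw [periodize, show k + m - 1 = k - 1 + m by omega, Nat.add_mod_right,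
    Nat.mod_eq_of_lt (by omega), Nat.sub_add_cancel hk]

lemma exists_ne_zero_and_succ_eq_zero {m k t : ℕ} {c : ℕ → ℂ} (hc : Function.Periodic c m)
    (hm : 0 < m) (hk : c k ≠ 0) (ht : c t = 0) : ∃ s, c (s + 1) ≠ 0 ∧ c (s + 2) = 0 := by
  by_contra! h
  obtain ⟨b, hb⟩ : ∃ b, k + m = b + 1 := ⟨k + m - 1, by omega⟩
  have hall (j : ℕ) : c (b + 1 + j) ≠ 0 := by
    induction j with
    | zero => rwa [← hb, hc]
    | succ j ih => simpa only [← add_assoc, add_right_comm b 1 j] using h (b + j) (by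
        rwa [add_right_comm] at ih)
  have hkm : k ≤ k * m := Nat.le_mul_of_pos_right k hm
  have hper := hc.nat_mul (k + 1) t
  rw [Nat.cast_id] at hper
  apply hall (t + (k + 1) * m - (b + 1))
  rw [show b + 1 + (t + (k + 1) * m - (b + 1)) = t + (k + 1) * m by rw [add_mul]; omega,
    hper, ht]

lemma exists_shift_contract_ne_zero {m k t : ℕ} {c : ℕ → ℂ} (hc : Function.Periodic c m)
    (hm : 5 ≤ m) (hk : c k ≠ 0) (ht : c t = 0) :
    ∃ s, c (s + 1) ≠ 0 ∧ c (s + 2) = 0 ∧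
      ∃ j, 1 ≤ j ∧ j ≤ m - 2 ∧ contract (fun i => c (i + s)) j ≠ 0 := by
  obtain ⟨s, hs1, hs2⟩ := exists_ne_zero_and_succ_eq_zero hc (by omega) hk ht
  by_cases hs : ∃ j, 1 ≤ j ∧ j ≤ m - 2 ∧ contract (fun i => c (i + s)) j ≠ 0
  · exact ⟨s, hs1, hs2, hs⟩
  -- The contraction at `s` vanishes, so `c` is `(a, 0, -a, 0, …, 0)` from `s + 1` on.
  push Not at hs
  have h1 := hs 1 le_rfl (by omega)
  have h2 := hs 2 (by omega) (by omega)
  have h3 := hs 3 (by omega) (by omega)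
  simp only [contract, if_pos, if_neg (show (2 : ℕ) ≠ 1 by omega),
    if_neg (show (3 : ℕ) ≠ 1 by omega)] at h1 h2 h3
  refine ⟨s + 2, ?_, ?_, 1, le_rfl, by omega, ?_⟩
  · rw [show s + 2 + 1 = 3 + s by ring, eq_neg_of_add_eq_zero_right h1, add_comm]
    exact neg_ne_zero.mpr hs1
  · rwa [show s + 2 + 2 = 2 + 2 + s by ring]
  · simp only [contract, if_pos, show 3 + (s + 2) = 3 + 2 + s by ring, h3, add_zero]
    rw [show 1 + (s + 2) = 3 + s by ring, eq_neg_of_add_eq_zero_right h1, add_comm]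
    exact neg_ne_zero.mpr hs1

theorem hasNonvanishingTriangulation_of_etaProd_eq_smul {m : ℕ} {c : ℕ → ℂ} {ε : ℂ}
    (hc : etaProd c 1 m = ε • 1) (hnz : ∃ k, 1 ≤ k ∧ k ≤ m ∧ c k ≠ 0) :
    HasNonvanishingTriangulation m c := by
  induction m using Nat.strong_induction_on generalizing c ε with
  | _ m ih =>
  by_cases hm : m ≤ 3
  · exact hasNonvanishingTriangulation_of_le_three hm c
  by_cases hz : ∃ t, 1 ≤ t ∧ t ≤ m ∧ c t = 0
  swap
  · push Not at hz
    exact hasNonvanishingTriangulation_fan fun j hj hjm _ => hz _ (by omega) (by omega)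
  obtain ⟨k, hk1, hkm, hk⟩ := hnz
  obtain ⟨t, ht1, htm, ht⟩ := hz
  have hd := periodic_periodize m c
  have hdc (i : ℕ) (hi : 1 ≤ i) (him : i ≤ m) := periodize_apply c hi him
  have hdQ : etaProd (periodize m c) 1 m = ε • 1 :=
    (etaProd_congr fun i _ => hdc (1 + i) (by omega) (by omega)).trans hc
  rw [← hdc k hk1 hkm] at hk
  rw [← hdc t ht1 htm] at ht
  suffices ∃ s, HasNonvanishingTriangulation m fun i => periodize m c (i + s) by
    obtain ⟨s, hs⟩ := this
    exact (hs.of_shift hd hdQ s).congr hdc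
  by_cases hm4 : m = 4
  · obtain ⟨s, hs1, -⟩ := exists_ne_zero_and_succ_eq_zero hd (by omega) hk ht
    refine ⟨s, hasNonvanishingTriangulation_fan fun j hj hjm hzero => absurd ?_ hs1⟩
    rwa [show j = 1 + 2 by omega, friezeEntry_ear, add_comm] at hzero
  obtain ⟨s, hs1, hs2, hnz'⟩ := exists_shift_contract_ne_zero hd (by omega) hk ht
  obtain ⟨n, rfl⟩ : ∃ n, m = n + 2 := ⟨m - 2, by omega⟩
  refine ⟨s, .of_contract (by omega) ?_ ?_ (ih n (by omega) (ε := -ε) ?_ hnz')⟩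
  · rwa [add_comm 1 s]
  · rwa [add_comm 2 s]
  · exact etaProd_contract_eq_smul (by rwa [add_comm 2 s]) (by omega)
      (by rw [etaProd_shift, etaProd_add_eq_smul_of_periodic hd hdQ])

theorem stmt16_general (m : ℕ) (c : ℕ → ℂ)
    (hq : ((List.range m).map (fun k => eta (c (k + 1)))).prod = -1)
    (hnz : ∃ k : ℕ, 1 ≤ k ∧ k ≤ m ∧ c k ≠ 0) :
    ∃ T : Finset (ℕ × ℕ), IsTriangulation m T ∧
      ∀ p ∈ T,
        (((List.range (p.2 - p.1 - 1)).map (fun k => eta (c (p.1 + k)))).prod) 0 0 ≠ 0 := by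
  have hc : etaProd c 1 m = (-1 : ℂ) • 1 := by
    rw [neg_one_smul, ← hq]
    simp only [etaProd, add_comm 1]
  exact hasNonvanishingTriangulation_of_etaProd_eq_smul hc hnz

/-- If `(c₁, …, c_m)`, `m ≥ 4`, is a quiddity cycle with at least one non-zero entry, then
there is a triangulation of the `m`-gon all of whose diagonals `(i, j)` have non-zero
frieze entry, the `(1,1)`-entry of `η(c_i)·η(c_{i+1})⋯η(c_{j−2})`. -/
theorem stmt16 (m : ℕ) (hm : 4 ≤ m) (c : ℕ → ℂ)
    (hq : ((List.range m).map (fun k => eta (c (k + 1)))).prod = -1)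
    (hnz : ∃ k : ℕ, 1 ≤ k ∧ k ≤ m ∧ c k ≠ 0) :
    ∃ T : Finset (ℕ × ℕ), IsTriangulation m T ∧
      ∀ p ∈ T,
        (((List.range (p.2 - p.1 - 1)).map (fun k => eta (c (p.1 + k)))).prod) 0 0 ≠ 0 :=
  stmt16_general m c hq hnz
end
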